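/- Let F be a finite field with q elements and characteristic different from 2, and let t = diag(1, 1, 1, -1) ∈ GL_4(F). The number of involutions x ∈ GL_4(F) with x ≠ t, rank(x - 1) = 1, and xt = tx equals q⁴ + q³ + q². -/

import Mathlib

/-!
An involution `x` with `rank (x - 1) = 1` is a reflection `1 + v wᵀ` with `w ⬝ v = -2`. It commutes
with `t = diag(1, …, 1, -1)` exactly when `v` and `w` do not mix the eigenspaces of `t`; apart from
`t` itself this forces `v` and `w` to live in the `+1`-eigenspace `Fⁿ`. Such reflections of `Fⁿ`
are parametrised bijectively by a point `[v]` of `ℙ(Fⁿ)`, normalised to its chosen representative,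
together with a `w` on the affine hyperplane `w ⬝ v = -2`, giving `(1 + q + ⋯ + qⁿ⁻¹) qⁿ⁻¹`
of them; for `n = 3` this is `q⁴ + q³ + q²`.
-/

open Matrix Finset
open scoped LinearAlgebra.Projectivization

namespace Matrix

section RankOne

variable {m n K : Type*} [Field K]

theorem vecMulVec_right_injective {v : m → K} (hv : v ≠ 0) :
    Function.Injective (vecMulVec v : (n → K) → Matrix m n K) := by
  obtain ⟨i, hi⟩ : ∃ i, v i ≠ 0 := Function.ne_iff.mp hv
  exact fun w w' h => funext fun j => mul_left_cancel₀ hi (congrFun₂ h i j)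

theorem exists_smul_eq_of_vecMulVec_eq {v v' : m → K} {w w' : n → K} (hw : w ≠ 0)
    (h : vecMulVec v w = vecMulVec v' w') : ∃ a : K, a • v' = v := by
  obtain ⟨j, hj⟩ : ∃ j, w j ≠ 0 := Function.ne_iff.mp hw
  refine ⟨w' j / w j, funext fun i => ?_⟩
  rw [Pi.smul_apply, smul_eq_mul, div_mul_eq_mul_div, mul_comm, ← vecMulVec_apply, ← h,
    vecMulVec_apply, mul_div_cancel_right₀ _ hj]

variable [Fintype n] [DecidableEq n]

theorem exists_vecMulVec_eq_of_rank_eq_one {M : Matrix m n K} (h : M.rank = 1) :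
    ∃ v w, vecMulVec v w = M := by
  obtain ⟨⟨v, hv⟩, -, hspan⟩ := finrank_eq_one_iff'.mp h
  choose c hc using fun j => hspan ⟨M *ᵥ Pi.single j 1, LinearMap.mem_range_self _ _⟩
  refine ⟨v, c, ext fun i j => ?_⟩
  have := congrFun (congrArg Subtype.val (hc j)) i
  simp only [SetLike.mk_smul_mk, Pi.smul_apply, smul_eq_mul, mulVec_single_one] at this
  rw [vecMulVec_apply, mul_comm, this, col_apply]

theorem rank_vecMulVec_of_ne_zero {v : m → K} {w : n → K} (hv : v ≠ 0) (hw : w ≠ 0) :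
    (vecMulVec v w).rank = 1 := by
  obtain ⟨i, hi⟩ : ∃ i, v i ≠ 0 := Function.ne_iff.mp hv
  obtain ⟨j, hj⟩ : ∃ j, w j ≠ 0 := Function.ne_iff.mp hw
  refine le_antisymm (rank_vecMulVec_le v w)
    (Nat.one_le_iff_ne_zero.mpr fun h => mul_ne_zero hi hj ?_)
  rw [rank, Submodule.finrank_eq_zero, LinearMap.range_eq_bot] at h
  simpa [vecMulVec_apply] using congrFun (LinearMap.congr_fun h (Pi.single j 1)) i

end RankOne

variable {n R K : Type*} [Fintype n]

theorem one_add_vecMulVec_mul_self [DecidableEq n] [CommRing R] (v w : n → R) :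
    (1 + vecMulVec v w) * (1 + vecMulVec v w) = 1 + (2 + w ⬝ᵥ v) • vecMulVec v w := by
  have hsq : vecMulVec v w * vecMulVec v w = (w ⬝ᵥ v) • vecMulVec v w := by
    rw [vecMulVec_mul_vecMulVec, vecMulVec_smul]
  rw [add_smul, two_smul, ← hsq]
  noncomm_ring

variable [Field K]

theorem ne_zero_of_dotProduct_eq {v w : n → K} {c : K} (hc : c ≠ 0) (h : w ⬝ᵥ v = c) :
    v ≠ 0 ∧ w ≠ 0 := by
  constructor <;> rintro rfl <;> simp [hc.symm] at h

theorem mul_self_eq_one_and_rank_sub_one_iff [DecidableEq n] (h2 : (2 : K) ≠ 0)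
    {x : Matrix n n K} :
    x * x = 1 ∧ (x - 1).rank = 1 ↔ ∃ v w : n → K, w ⬝ᵥ v = -2 ∧ x = 1 + vecMulVec v w := by
  constructor
  · rintro ⟨hsq, hrk⟩
    obtain ⟨v, w, hvw⟩ := exists_vecMulVec_eq_of_rank_eq_one hrk
    have hx : x = 1 + vecMulVec v w := by rw [hvw, add_sub_cancel]
    have hne : vecMulVec v w ≠ 0 := fun h0 => by simp [hvw ▸ h0, rank_zero] at hrk
    rw [hx, one_add_vecMulVec_mul_self, add_eq_left, smul_eq_zero] at hsq
    exact ⟨v, w, eq_neg_of_add_eq_zero_right (hsq.resolve_right hne), hx⟩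
  · rintro ⟨v, w, hd, rfl⟩
    obtain ⟨hv, hw⟩ := ne_zero_of_dotProduct_eq (neg_ne_zero.mpr h2) hd
    rw [one_add_vecMulVec_mul_self, hd, add_neg_cancel, zero_smul, add_zero,
      add_sub_cancel_left]
    exact ⟨rfl, rank_vecMulVec_of_ne_zero hv hw⟩

theorem commute_vecMulVec_diagonal_iff [DecidableEq n] (v w d : n → K) :
    Commute (vecMulVec v w) (diagonal d) ↔ ∀ i j, d i ≠ d j → v i * w j = 0 := by
  simp only [Commute, SemiconjBy, ← Matrix.ext_iff, mul_diagonal, diagonal_mul, vecMulVec_apply]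
  refine forall₂_congr fun i j => ⟨fun h hd => ?_, fun h => ?_⟩
  · have : v i * w j * (d j - d i) = 0 := by linear_combination h
    exact (mul_eq_zero.mp this).resolve_right (sub_ne_zero.mpr (Ne.symm hd))
  · by_cases hd : d i = d j
    · rw [hd, mul_comm]
    · rw [h hd, zero_mul, mul_zero]

theorem card_dotProduct_eq [Fintype K] {v : n → K} (hv : v ≠ 0) (c : K) :
    Nat.card {w : n → K // w ⬝ᵥ v = c} = Nat.card K ^ (Fintype.card n - 1) := by
  classical
  obtain ⟨i, hi⟩ : ∃ i, v i ≠ 0 := Function.ne_iff.mp hv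
  let f : (n → K) →+ K :=
    { toFun := (· ⬝ᵥ v), map_zero' := zero_dotProduct v, map_add' := (add_dotProduct · · v) }
  have hsurj (c : K) : c ∈ Set.range f := ⟨Pi.single i (c / v i), by simp [f, hi]⟩
  have hfib : Fintype.card (n → K) = Fintype.card K * #{w | f w = c} := by
    rw [← Finset.card_univ, Finset.card_eq_sum_card_fiberwise (f := f) (t := univ) (by simp)]
    simp_rw [AddMonoidHom.card_fiber_eq_of_mem_range f (hsurj _) (hsurj c)]
    rw [Finset.sum_const, Finset.card_univ, smul_eq_mul]
  have : Nonempty n := ⟨i⟩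
  obtain ⟨k, hk⟩ := Nat.exists_eq_add_one_of_ne_zero (Fintype.card_ne_zero (α := n))
  rw [Fintype.card_fun, hk, pow_succ'] at hfib
  rw [Nat.card_eq_fintype_card, Fintype.card_subtype, Nat.card_eq_fintype_card, hk,
    Nat.add_sub_cancel]
  exact (Nat.eq_of_mul_eq_mul_left Fintype.card_pos hfib).symm

end Matrix

namespace Projectivization

variable {m n K : Type*} [Field K]

theorem eq_of_vecMulVec_rep_eq {L L' : ℙ K (m → K)} {w w' : n → K} (hw : w ≠ 0)
    (h : vecMulVec L.rep w = vecMulVec L'.rep w') : L = L' ∧ w = w' := by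
  obtain ⟨a, ha⟩ := exists_smul_eq_of_vecMulVec_eq hw h
  have hL : L = L' := by
    rw [← L.mk_rep, ← L'.mk_rep, mk_eq_mk_iff']
    exact ⟨a, ha⟩
  subst hL
  exact ⟨rfl, vecMulVec_right_injective L.rep_nonzero h⟩

theorem exists_vecMulVec_rep_eq [Fintype n] {v : n → K} (hv : v ≠ 0) (w : n → K) :
    ∃ w', w' ⬝ᵥ (mk K v hv).rep = w ⬝ᵥ v ∧ vecMulVec (mk K v hv).rep w' = vecMulVec v w := by
  obtain ⟨a, ha⟩ := (mk_eq_mk_iff' K _ _ (rep_nonzero _) hv).mp (mk_rep _)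
  have ha0 : a ≠ 0 := by
    rintro rfl
    exact rep_nonzero _ (by rw [← ha, zero_smul])
  refine ⟨a⁻¹ • w, ?_, ?_⟩
  · rw [← ha, smul_dotProduct, dotProduct_smul, smul_smul, inv_mul_cancel₀ ha0, one_smul]
  · rw [← ha, smul_vecMulVec, vecMulVec_smul, smul_smul, mul_inv_cancel₀ ha0, one_smul]

theorem card_sigma_dotProduct_rep_eq [Fintype n] [Fintype K] (c : K) :
    Nat.card (Σ L : ℙ K (n → K), {w : n → K // w ⬝ᵥ L.rep = c}) =
      Nat.card (ℙ K (n → K)) * Nat.card K ^ (Fintype.card n - 1) := by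
  have := Fintype.ofFinite (ℙ K (n → K))
  rw [Nat.card_sigma, Finset.sum_congr rfl fun L _ => card_dotProduct_eq L.rep_nonzero c,
    Finset.sum_const, Finset.card_univ, smul_eq_mul,
    Nat.card_eq_fintype_card (α := ℙ K (n → K))]

end Projectivization

section LastNegOne

open Fin

def lastNegOne {R : Type*} [One R] [Neg R] (n : ℕ) : Fin (n + 1) → R :=
  fun i => if (i : ℕ) < n then 1 else -1

variable {R F : Type*} {n : ℕ}

@[simp]
theorem lastNegOne_castSucc [One R] [Neg R] (i : Fin n) : lastNegOne n i.castSucc = (1 : R) :=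
  if_pos i.isLt

@[simp]
theorem lastNegOne_last [One R] [Neg R] : lastNegOne n (last n) = (-1 : R) :=
  if_neg (lt_irrefl n)

@[simp]
theorem snoc_zero_dotProduct_snoc_zero [NonUnitalNonAssocSemiring R] (v w : Fin n → R) :
    (snoc w 0 : Fin (n + 1) → R) ⬝ᵥ snoc v 0 = w ⬝ᵥ v := by
  simp [dotProduct, sum_univ_castSucc]

theorem vecMulVec_snoc_zero_inj [MulZeroClass R] {v w v' w' : Fin n → R} :
    vecMulVec (snoc v 0 : Fin (n + 1) → R) (snoc w 0) = vecMulVec (snoc v' 0) (snoc w' 0) ↔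
      vecMulVec v w = vecMulVec v' w' := by
  simp [← Matrix.ext_iff, forall_fin_succ', vecMulVec_apply]

variable [Field F]

theorem commute_vecMulVec_diagonal_lastNegOne_iff (h2 : (2 : F) ≠ 0) (u z : Fin (n + 1) → F) :
    Commute (vecMulVec u z) (diagonal (lastNegOne n)) ↔
      (∀ i : Fin n, u i.castSucc * z (last n) = 0) ∧
        ∀ j : Fin n, u (last n) * z j.castSucc = 0 := by
  have h : (1 : F) ≠ -1 := fun h => h2 (by linear_combination h)
  rw [commute_vecMulVec_diagonal_iff]
  simp [forall_fin_succ', h, h.symm]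

theorem last_eq_zero_of_commute_of_ne (h2 : (2 : F) ≠ 0) {u z : Fin (n + 1) → F}
    (hd : z ⬝ᵥ u = -2) (hc : Commute (vecMulVec u z) (diagonal (lastNegOne n)))
    (hne : 1 + vecMulVec u z ≠ diagonal (lastNegOne n)) :
    u (last n) = 0 ∧ z (last n) = 0 := by
  obtain ⟨hcol, hrow⟩ := (commute_vecMulVec_diagonal_lastNegOne_iff h2 u z).mp hc
  have h20 : (-2 : F) ≠ 0 := neg_ne_zero.mpr h2
  have hu : u (last n) = 0 := by
    -- otherwise `u` and `z` are both supported at `last n`, which makes `1 + vecMulVec u z = t`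
    by_contra hα
    have hb (j : Fin n) : z j.castSucc = 0 := (mul_eq_zero.mp (hrow j)).resolve_left hα
    have hβ : z (last n) ≠ 0 := fun hβ => by
      simp [dotProduct, sum_univ_castSucc, hb, hβ, h20.symm] at hd
    have ha (i : Fin n) : u i.castSucc = 0 := (mul_eq_zero.mp (hcol i)).resolve_right hβ
    have hd' : u (last n) * z (last n) = -2 := by
      simpa [dotProduct, sum_univ_castSucc, ha, hb, mul_comm] using hd
    refine hne (ext fun i j => ?_)
    induction i using lastCases <;> induction j using lastCases <;>
      simp [ha, hb, vecMulVec_apply, one_apply, hd', diagonal_apply, (castSucc_ne_last _).symm]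
    norm_num
  obtain ⟨i, hi⟩ : ∃ i : Fin n, u i.castSucc ≠ 0 := by
    by_contra! h
    simp [dotProduct, sum_univ_castSucc, h, hu, h20.symm] at hd
  exact ⟨hu, (mul_eq_zero.mp (hcol i)).resolve_left hi⟩

variable (n) in
/-- The set `Δ₁(t)` of neighbours of `t = diag(1, …, 1, -1)` in the commuting involution graph on
the class of reflections. -/
def commutingReflections : Set (Matrix (Fin (n + 1)) (Fin (n + 1)) F) :=
  {x | x * x = 1 ∧ x ≠ diagonal (lastNegOne n) ∧ (x - 1).rank = 1 ∧
    x * diagonal (lastNegOne n) = diagonal (lastNegOne n) * x}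

theorem mem_commutingReflections_iff (h2 : (2 : F) ≠ 0)
    {x : Matrix (Fin (n + 1)) (Fin (n + 1)) F} :
    x ∈ commutingReflections n ↔
      ∃ v w : Fin n → F, w ⬝ᵥ v = -2 ∧ x = 1 + vecMulVec (snoc v 0) (snoc w 0) := by
  constructor
  · rintro ⟨hsq, hne, hrk, hc⟩
    obtain ⟨u, z, hd, rfl⟩ := (mul_self_eq_one_and_rank_sub_one_iff h2).mp ⟨hsq, hrk⟩
    have hc' : Commute (vecMulVec u z) (diagonal (lastNegOne n)) := by
      simpa using Commute.sub_left hc (Commute.one_left _)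
    obtain ⟨hu, hz⟩ := last_eq_zero_of_commute_of_ne h2 hd hc' hne
    have hu' : snoc (init u) 0 = u := hu ▸ snoc_init_self u
    have hz' : snoc (init z) 0 = z := hz ▸ snoc_init_self z
    refine ⟨init u, init z, ?_, by rw [hu', hz']⟩
    rwa [← snoc_zero_dotProduct_snoc_zero, hu', hz']
  · rintro ⟨v, w, hd, rfl⟩
    obtain ⟨hsq, hrk⟩ := (mul_self_eq_one_and_rank_sub_one_iff h2).mpr
      ⟨_, _, (snoc_zero_dotProduct_snoc_zero v w).trans hd, rfl⟩
    refine ⟨hsq, fun h => h2 ?_, hrk, (Commute.one_left _).add_left ?_⟩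
    · have := congrFun₂ h (last n) (last n)
      simp only [Matrix.add_apply, one_apply_eq, vecMulVec_apply, snoc_last, mul_zero, add_zero,
        diagonal_apply_eq, lastNegOne_last] at this
      linear_combination this
    · simp [commute_vecMulVec_diagonal_lastNegOne_iff h2]

theorem card_commutingReflections [Fintype F] (h2 : (2 : F) ≠ 0) :
    Nat.card (commutingReflections (F := F) n) =
      (∑ i ∈ range n, Nat.card F ^ i) * Nat.card F ^ (n - 1) := by
  have hw (L : ℙ F (Fin n → F)) (w : {w : Fin n → F // w ⬝ᵥ L.rep = -2}) : w.1 ≠ 0 :=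
    (ne_zero_of_dotProduct_eq (neg_ne_zero.mpr h2) w.2).2
  let e : (Σ L : ℙ F (Fin n → F), {w : Fin n → F // w ⬝ᵥ L.rep = -2}) → commutingReflections n :=
    fun p => ⟨1 + vecMulVec (snoc p.1.rep 0) (snoc p.2.1 0),
      (mem_commutingReflections_iff h2).mpr ⟨p.1.rep, p.2.1, p.2.2, rfl⟩⟩
  have he : Function.Bijective e := by
    refine ⟨fun ⟨L, w⟩ ⟨L', w'⟩ h => ?_, fun ⟨x, hx⟩ => ?_⟩
    · obtain ⟨rfl, hww'⟩ := Projectivization.eq_of_vecMulVec_rep_eq (hw L w)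
        (vecMulVec_snoc_zero_inj.mp (add_left_cancel (congrArg Subtype.val h)))
      exact Sigma.subtype_ext rfl hww'
    · obtain ⟨v, w, hd, rfl⟩ := (mem_commutingReflections_iff h2).mp hx
      have hv := (ne_zero_of_dotProduct_eq (neg_ne_zero.mpr h2) hd).1
      obtain ⟨w', hdw', hvw'⟩ := Projectivization.exists_vecMulVec_rep_eq hv w
      exact ⟨⟨.mk F v hv, w', hdw'.trans hd⟩,
        Subtype.ext (congrArg (1 + ·) (vecMulVec_snoc_zero_inj.mpr hvw'))⟩
  rw [← Nat.card_congr (Equiv.ofBijective e he), Projectivization.card_sigma_dotProduct_rep_eq,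
    Projectivization.card_of_finrank F (Fin n → F) (Module.finrank_fin_fun F), Fintype.card_fin]

end LastNegOne

theorem stmt_18_general {F : Type*} [Field F] [Fintype F]
    (hF : ringChar F ≠ 2) :
    Nat.card {x : Matrix (Fin 4) (Fin 4) F //
        x * x = 1 ∧
        x ≠ Matrix.diagonal (fun i : Fin 4 => if (i : ℕ) < 3 then (1 : F) else -1) ∧
        (x - 1).rank = 1 ∧
        x * Matrix.diagonal (fun i : Fin 4 => if (i : ℕ) < 3 then (1 : F) else -1) =
          Matrix.diagonal (fun i : Fin 4 => if (i : ℕ) < 3 then (1 : F) else -1) * x} =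
      (Fintype.card F) ^ 4 + (Fintype.card F) ^ 3 + (Fintype.card F) ^ 2 := by
  refine (card_commutingReflections (n := 3) (Ring.two_ne_zero hF)).trans ?_
  simp only [sum_range_succ, sum_range_zero, Nat.card_eq_fintype_card]
  ring

theorem stmt_18 {F : Type*} [Field F] [Fintype F] [DecidableEq F]
    (hF : ringChar F ≠ 2) :
    Nat.card {x : Matrix (Fin 4) (Fin 4) F //
        x * x = 1 ∧
        x ≠ Matrix.diagonal (fun i : Fin 4 => if (i : ℕ) < 3 then (1 : F) else -1) ∧
        (x - 1).rank = 1 ∧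
        x * Matrix.diagonal (fun i : Fin 4 => if (i : ℕ) < 3 then (1 : F) else -1) =
          Matrix.diagonal (fun i : Fin 4 => if (i : ℕ) < 3 then (1 : F) else -1) * x} =
      (Fintype.card F) ^ 4 + (Fintype.card F) ^ 3 + (Fintype.card F) ^ 2 :=
  stmt_18_general hF
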